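/- arXiv:1908.02132 — 7 statements merged into one kernel-verified Lean document; each statement's English description precedes it below -/
import Mathlib

section
/- For every expanding search S on Q and every real r > 0 with f_Q(r) < ∞, the supremum over points H ≠ O of the normalized search time T(S,H)/d(H) is at least f_Q(r)/r. Consequently, every expanding search S satisfies sup_{H ≠ O} T(S,H)/d(H) ≥ sup_{r>0} f_Q(r)/r. -/
open MeasureTheory Metric

/-!
If every point `H ≠ O` is found by time `A · d(H)`, then at any time `t > A r` the search has
covered the whole ball `Q[r]` except possibly the root, which is null because `λ(S 0) = 0`.
Hence `f_Q(r) ≤ λ(S t) = t`, and letting `t ↓ A r` gives `f_Q(r) ≤ A r`.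
-/

/-- The (expanding) search time of the point `H` under the search `S`: the infimum of the
admissible times `t` (i.e. `0 ≤ t < λ(Q)`) with `H ∈ S t`, equal to `∞` if there is none. -/
noncomputable def searchTime {Q : Type*} [MetricSpace Q] [MeasurableSpace Q]
    (μ : Measure Q) (S : ℝ → Set Q) (H : Q) : ENNReal :=
  ⨅ (t : ℝ) (_ : 0 ≤ t ∧ ENNReal.ofReal t < μ Set.univ ∧ H ∈ S t), ENNReal.ofReal t

/-- `S` is an expanding search on `Q` rooted at `O`: a family of measurable connected subsets
`S t` for `0 ≤ t < λ(Q)` with `S 0 = {O}`, nondecreasing in `t`, and `λ (S t) = t`. -/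
def IsExpandingSearch {Q : Type*} [MetricSpace Q] [MeasurableSpace Q]
    (μ : Measure Q) (O : Q) (S : ℝ → Set Q) : Prop :=
  S 0 = {O} ∧
  (∀ t : ℝ, 0 ≤ t → ENNReal.ofReal t < μ Set.univ →
    MeasurableSet (S t) ∧ IsConnected (S t) ∧ μ (S t) = ENNReal.ofReal t) ∧
  (∀ t t' : ℝ, 0 ≤ t → t ≤ t' → ENNReal.ofReal t' < μ Set.univ → S t ⊆ S t')

noncomputable def competitiveRatio {Q : Type*} [MetricSpace Q] [MeasurableSpace Q]
    (μ : Measure Q) (O : Q) (S : ℝ → Set Q) : ENNReal :=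
  ⨆ (H : Q) (_ : H ≠ O), searchTime μ S H / ENNReal.ofReal (dist O H)

section

variable {Q : Type*} [MetricSpace Q] [MeasurableSpace Q] {μ : Measure Q} {O : Q}
  {S : ℝ → Set Q}

theorem searchTime_le_competitiveRatio_mul_dist {H : Q} (hH : H ≠ O) :
    searchTime μ S H ≤ competitiveRatio μ O S * ENNReal.ofReal (dist O H) := by
  have hd : ENNReal.ofReal (dist O H) ≠ 0 := by
    simpa using dist_pos.mpr hH.symm
  rw [← ENNReal.div_le_iff_le_mul (Or.inl hd) (Or.inl ENNReal.ofReal_ne_top)]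
  exact le_iSup₂ (f := fun (H : Q) (_ : H ≠ O) => searchTime μ S H / ENNReal.ofReal (dist O H))
    H hH

namespace IsExpandingSearch

theorem measure_eq (hS : IsExpandingSearch μ O S) {t : ℝ} (ht0 : 0 ≤ t)
    (ht : ENNReal.ofReal t < μ Set.univ) : μ (S t) = ENNReal.ofReal t :=
  (hS.2.1 t ht0 ht).2.2

theorem measure_root (hS : IsExpandingSearch μ O S) : μ {O} = 0 := by
  rcases eq_or_ne (μ Set.univ) 0 with h0 | h0
  · exact measure_mono_null (Set.subset_univ _) h0
  · simpa [hS.1] using hS.measure_eq le_rfl (by simpa using h0.bot_lt)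

theorem mem_of_searchTime_lt (hS : IsExpandingSearch μ O S) {H : Q} {t : ℝ}
    (ht : ENNReal.ofReal t < μ Set.univ) (hH : searchTime μ S H < ENNReal.ofReal t) :
    H ∈ S t := by
  simp only [searchTime, iInf_lt_iff] at hH
  obtain ⟨t', ⟨ht'0, -, hHt'⟩, ht't⟩ := hH
  exact hS.2.2 t' t ht'0 ((ENNReal.ofReal_lt_ofReal_iff_of_nonneg ht'0).1 ht't).le ht hHt'

theorem measure_closedBall_le_competitiveRatio_mul (hS : IsExpandingSearch μ O S) (r : ℝ) :
    μ (closedBall O r) ≤ competitiveRatio μ O S * ENNReal.ofReal r := by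
  refine le_of_forall_gt_imp_ge_of_dense fun τ hτ => ?_
  by_cases hτU : μ Set.univ ≤ τ
  · exact (measure_mono (Set.subset_univ _)).trans hτU
  rw [not_le] at hτU
  set t := τ.toReal
  have ht : ENNReal.ofReal t = τ := ENNReal.ofReal_toReal hτU.ne_top
  have hU : ENNReal.ofReal t < μ Set.univ := ht ▸ hτU
  have hball : closedBall O r ⊆ S t ∪ {O} := by
    intro H hHr
    by_cases hHO : H = O
    · exact Or.inr hHO
    refine Or.inl (hS.mem_of_searchTime_lt hU ?_)
    have hdr : ENNReal.ofReal (dist O H) ≤ ENNReal.ofReal r :=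
      ENNReal.ofReal_le_ofReal (by simpa [dist_comm] using hHr)
    calc searchTime μ S H ≤ competitiveRatio μ O S * ENNReal.ofReal (dist O H) :=
          searchTime_le_competitiveRatio_mul_dist hHO
      _ ≤ competitiveRatio μ O S * ENNReal.ofReal r := by gcongr
      _ < ENNReal.ofReal t := ht ▸ hτ
  calc μ (closedBall O r) ≤ μ (S t ∪ {O}) := measure_mono hball
    _ ≤ μ (S t) + μ {O} := measure_union_le _ _
    _ = τ := by rw [hS.measure_eq ENNReal.toReal_nonneg hU, hS.measure_root, add_zero, ht]

end IsExpandingSearch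

end

/-- For every expanding search `S` on `Q` and every `r > 0` with
`f_Q(r) < ∞`, the supremum over `H ≠ O` of the normalized search time is at least `f_Q(r)/r`;
consequently it is at least `sup_{r>0} f_Q(r)/r`. -/
theorem expanding_search_competitive_lower_bound
    {Q : Type*} [MetricSpace Q] [MeasurableSpace Q]
    (μ : Measure Q) (O : Q) (S : ℝ → Set Q) (hS : IsExpandingSearch μ O S) :
    (∀ r : ℝ, 0 < r → μ (closedBall O r) < ⊤ →
      μ (closedBall O r) / ENNReal.ofReal r ≤
        ⨆ (H : Q) (_ : H ≠ O), searchTime μ S H / ENNReal.ofReal (dist O H)) ∧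
    (⨆ (r : ℝ) (_ : 0 < r), μ (closedBall O r) / ENNReal.ofReal r) ≤
      ⨆ (H : Q) (_ : H ≠ O), searchTime μ S H / ENNReal.ofReal (dist O H) := by
  have hball (r : ℝ) : μ (closedBall O r) / ENNReal.ofReal r ≤ competitiveRatio μ O S :=
    ENNReal.div_le_of_le_mul (hS.measure_closedBall_le_competitiveRatio_mul r)
  exact ⟨fun r _ _ => hball r, iSup₂_le fun r _ => hball r⟩
end

section
/- Let A ⊆ Q be λ-measurable with 0 < λ(A) < ∞ and set δ := inf_{x ∈ A} d(x). Let S be an expanding search on Q such that x ↦ T(S,x) is λ-measurable, and suppose that for every t, if S(t) ∩ A ≠ ∅ then λ(S(t) \ A) ≥ δ (this holds on a network, where each S(t) is a connected set containing O). Then (1/λ(A)) ∫_A T(S,x) dλ(x) ≥ δ + λ(A)/2; that is, the expected search time of S against a Hider distributed uniformly on A is at least δ + λ(A)/2. -/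
open MeasureTheory Metric

/-!
Write `a = λ(A)` and `T` for the search time. Whenever `S(t)` meets `A` it has spent at least
`δ` of its measure `t` outside `A`, so `λ(A ∩ {T < t}) ≤ t - δ`; only countably many (rational)
times are needed to exhaust `{T < t}`, which makes this a bound on an increasing countable union.
Hence `λ(A ∩ {T ≥ t}) ≥ a - (t - δ)⁺`, and the layer-cake formula gives
`∫_A T ≥ ∫₀^∞ (a - (t - δ)⁺)⁺ dt = δ a + a² / 2`.
-/

open Set ENNReal

theorem lintegral_meas_le_le_lintegral {α : Type*} [MeasurableSpace α] (μ : Measure α)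
    {f : α → ℝ≥0∞} (hf : AEMeasurable f μ) :
    ∫⁻ t in Ioi 0, μ {x | ENNReal.ofReal t ≤ f x} ≤ ∫⁻ x, f x ∂μ := by
  by_cases hinf : ∫⁻ x, f x ∂μ = ∞
  · exact hinf ▸ le_top
  have hlt : ∀ᵐ x ∂μ, f x < ∞ := ae_lt_top' hf hinf
  refine le_of_eq ?_
  calc ∫⁻ t in Ioi 0, μ {x | ENNReal.ofReal t ≤ f x}
      = ∫⁻ t in Ioi 0, μ {x | t ≤ (f x).toReal} := by
        refine setLIntegral_congr_fun measurableSet_Ioi fun t _ => measure_congr ?_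
        filter_upwards [hlt] with x hx
        exact propext (ENNReal.ofReal_le_iff_le_toReal hx.ne)
    _ = ∫⁻ x, ENNReal.ofReal (f x).toReal ∂μ :=
        (lintegral_eq_lintegral_meas_le μ (ae_of_all _ fun _ => toReal_nonneg)
          hf.ennreal_toReal).symm
    _ = ∫⁻ x, f x ∂μ := lintegral_congr_ae (hlt.mono fun x hx => ofReal_toReal hx.ne)

theorem integral_sub_max_sub_zero {a δ : ℝ} (ha : 0 ≤ a) (hδ : 0 ≤ δ) :
    ∫ t in 0..δ + a, (a - max (t - δ) 0) = δ * a + a ^ 2 / 2 := by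
  have hcont : Continuous fun t : ℝ => a - max (t - δ) 0 := by fun_prop
  rw [← intervalIntegral.integral_add_adjacent_intervals (b := δ) (hcont.intervalIntegrable _ _)
    (hcont.intervalIntegrable _ _)]
  have hflat : ∫ t in 0..δ, (a - max (t - δ) 0) = δ * a := by
    rw [intervalIntegral.integral_congr (g := fun _ => a) fun t ht => ?_]
    · simp
    · rw [uIcc_of_le hδ] at ht
      simp [ht.2]
  have hslope : ∫ t in δ..δ + a, (a - max (t - δ) 0) = a ^ 2 / 2 := by
    rw [intervalIntegral.integral_comp_sub_right (fun u => a - max u 0), sub_self,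
      add_sub_cancel_left, intervalIntegral.integral_congr (g := fun u => a - u) fun u hu => ?_]
    · rw [intervalIntegral.integral_sub intervalIntegrable_const
        intervalIntegral.intervalIntegrable_id, intervalIntegral.integral_const, integral_id]
      simp only [sub_zero, smul_eq_mul, ne_eq, OfNat.ofNat_ne_zero, not_false_eq_true, zero_pow]
      ring
    · rw [uIcc_of_le ha] at hu
      simp [hu.1]
  rw [hflat, hslope]

theorem lintegral_Ioi_tsub_ofReal_tsub {a : ℝ≥0∞} (ha : a ≠ ∞) {δ : ℝ} (hδ : 0 ≤ δ) :
    ∫⁻ t in Ioi 0, (a - (ENNReal.ofReal t - ENNReal.ofReal δ)) =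
      (ENNReal.ofReal δ + a / 2) * a := by
  obtain ⟨b, hb, rfl⟩ : ∃ b : ℝ, 0 ≤ b ∧ ENNReal.ofReal b = a :=
    ⟨a.toReal, toReal_nonneg, ofReal_toReal ha⟩
  set φ : ℝ → ℝ := fun t => b - max (t - δ) 0
  have hφ (t : ℝ) :
      ENNReal.ofReal b - (ENNReal.ofReal t - ENNReal.ofReal δ) = ENNReal.ofReal (φ t) := by
    rw [← ENNReal.ofReal_sub _ hδ, ENNReal.ofReal_sub _ (le_max_right _ _)]
    simp
  have htail : ∫⁻ t in Ioi (δ + b), ENNReal.ofReal (φ t) = 0 :=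
    setLIntegral_eq_zero measurableSet_Ioi fun t ht =>
      ofReal_of_nonpos (sub_nonpos.2 (le_max_of_le_left (by linarith [mem_Ioi.1 ht])))
  have hφ_nonneg : 0 ≤ᵐ[volume.restrict (Ioc 0 (δ + b))] φ :=
    ae_restrict_of_forall_mem measurableSet_Ioc fun t ht =>
      sub_nonneg.2 (max_le (by linarith [ht.2]) hb)
  have hφ_integrable : IntegrableOn φ (Ioc 0 (δ + b)) :=
    (by fun_prop : Continuous φ).integrableOn_Icc.mono_set Ioc_subset_Icc_self
  simp_rw [hφ]
  rw [← Ioc_union_Ioi_eq_Ioi (by positivity : 0 ≤ δ + b),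
    lintegral_union measurableSet_Ioi Ioc_disjoint_Ioi_same, htail, add_zero,
    ← ofReal_integral_eq_lintegral_ofReal hφ_integrable hφ_nonneg,
    ← intervalIntegral.integral_of_le (by positivity), integral_sub_max_sub_zero hb hδ,
    ← ofReal_ofNat 2, ← ENNReal.ofReal_div_of_pos two_pos,
    ← ENNReal.ofReal_add hδ (by positivity),
    ← ENNReal.ofReal_mul (by positivity)]
  ring_nf

namespace IsExpandingSearch

variable {Q : Type*} [MetricSpace Q] [MeasurableSpace Q] {μ : Measure Q} {O : Q} {S : ℝ → Set Q}

theorem exists_rat_mem_of_searchTime_lt (hS : IsExpandingSearch μ O S) {x : Q} {t : ℝ}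
    (hx : searchTime μ S x < ENNReal.ofReal t) :
    ∃ q : ℚ, (0 ≤ (q : ℝ) ∧ ENNReal.ofReal q < μ univ ∧ (q : ℝ) < t) ∧ x ∈ S q := by
  simp only [searchTime, iInf_lt_iff] at hx
  obtain ⟨s, ⟨hs0, hsμ, hxs⟩, hst⟩ := hx
  obtain ⟨q, -, hsq, hq⟩ := ENNReal.lt_iff_exists_rat_btwn.1 (lt_min hst hsμ)
  obtain ⟨hqt, hqμ⟩ := lt_min_iff.1 hq
  have hsq : s < q := (ofReal_lt_ofReal_iff'.1 hsq).1
  exact ⟨q, ⟨hs0.trans hsq.le, hqμ, (ofReal_lt_ofReal_iff'.1 hqt).1⟩,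
    hS.2.2 s q hs0 hsq.le hqμ hxs⟩

variable {A : Set Q} {c : ℝ≥0∞}

theorem measure_inter_le_sub (hS : IsExpandingSearch μ O S) (hA : MeasurableSet A)
    (hc : ∀ t : ℝ, 0 ≤ t → ENNReal.ofReal t < μ univ → (S t ∩ A).Nonempty → c ≤ μ (S t \ A))
    {t : ℝ} (ht : 0 ≤ t) (htμ : ENNReal.ofReal t < μ univ) :
    μ (S t ∩ A) ≤ ENNReal.ofReal t - c := by
  rcases (S t ∩ A).eq_empty_or_nonempty with hempty | hne
  · simp [hempty]
  have hsplit := measure_inter_add_sdiff (μ := μ) (S t) hA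
  rw [(hS.2.1 t ht htμ).2.2] at hsplit
  have hdiff_ne_top : μ (S t \ A) ≠ ∞ :=
    ne_top_of_le_ne_top ofReal_ne_top (hsplit ▸ le_add_self)
  rw [ENNReal.eq_sub_of_add_eq hdiff_ne_top hsplit]
  exact tsub_le_tsub_left (hc t ht htμ hne) _

theorem restrict_setOf_searchTime_lt_le (hS : IsExpandingSearch μ O S) (hA : MeasurableSet A)
    (hc : ∀ t : ℝ, 0 ≤ t → ENNReal.ofReal t < μ univ → (S t ∩ A).Nonempty → c ≤ μ (S t \ A))
    (t : ℝ) : μ.restrict A {x | searchTime μ S x < ENNReal.ofReal t} ≤ ENNReal.ofReal t - c := by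
  let I := {q : ℚ // 0 ≤ (q : ℝ) ∧ ENNReal.ofReal q < μ univ ∧ (q : ℝ) < t}
  have hmono : Monotone fun q : I => S q ∩ A := fun q r hqr =>
    inter_subset_inter_left _ (hS.2.2 _ _ q.2.1 (by exact_mod_cast hqr) r.2.2.1)
  calc μ.restrict A {x | searchTime μ S x < ENNReal.ofReal t}
      = μ ({x | searchTime μ S x < ENNReal.ofReal t} ∩ A) := Measure.restrict_apply' hA
    _ ≤ μ (⋃ q : I, S q ∩ A) := measure_mono fun x ⟨hx, hxA⟩ => by
        obtain ⟨q, hq, hxq⟩ := hS.exists_rat_mem_of_searchTime_lt hx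
        exact mem_iUnion.2 ⟨⟨q, hq⟩, hxq, hxA⟩
    _ = ⨆ q : I, μ (S q ∩ A) := hmono.directed_le.measure_iUnion
    _ ≤ ENNReal.ofReal t - c := iSup_le fun q =>
        (hS.measure_inter_le_sub hA hc q.2.1 q.2.2.1).trans
          (tsub_le_tsub_right (ofReal_le_ofReal q.2.2.2.le) c)

theorem sub_le_restrict_setOf_le_searchTime (hS : IsExpandingSearch μ O S)
    (hA : MeasurableSet A)
    (hc : ∀ t : ℝ, 0 ≤ t → ENNReal.ofReal t < μ univ → (S t ∩ A).Nonempty → c ≤ μ (S t \ A))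
    (t : ℝ) :
    μ A - (ENNReal.ofReal t - c) ≤ μ.restrict A {x | ENNReal.ofReal t ≤ searchTime μ S x} :=
  calc μ A - (ENNReal.ofReal t - c)
      ≤ μ.restrict A univ - μ.restrict A {x | searchTime μ S x < ENNReal.ofReal t} := by
        rw [Measure.restrict_apply_univ]
        exact tsub_le_tsub_left (hS.restrict_setOf_searchTime_lt_le hA hc t) _
    _ ≤ μ.restrict A (univ \ {x | searchTime μ S x < ENNReal.ofReal t}) := le_measure_sdiff
    _ = μ.restrict A {x | ENNReal.ofReal t ≤ searchTime μ S x} := by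
        congr 1
        ext x
        simp

end IsExpandingSearch

/-- Let `A` be measurable with `0 < λ(A) < ∞` and `δ = inf_{x ∈ A} d(x)`.
If `S` is an expanding search (with measurable search-time function) such that whenever
`S(t)` meets `A` one has `λ(S(t) \ A) ≥ δ`, then the expected search time of `S` against a
Hider uniform on `A` is at least `δ + λ(A)/2`. -/
theorem uniform_hider_offset_lower_bound
    {Q : Type*} [MetricSpace Q] [MeasurableSpace Q]
    (μ : Measure Q) (O : Q) (S : ℝ → Set Q) (hS : IsExpandingSearch μ O S)
    (hmeas : Measurable (searchTime μ S))
    (A : Set Q) (hA : MeasurableSet A) (hpos : 0 < μ A) (hfin : μ A < ⊤)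
    (hδ : ∀ t : ℝ, 0 ≤ t → ENNReal.ofReal t < μ Set.univ → (S t ∩ A).Nonempty →
      ENNReal.ofReal (sInf ((fun x => dist O x) '' A)) ≤ μ (S t \ A)) :
    ENNReal.ofReal (sInf ((fun x => dist O x) '' A)) + μ A / 2 ≤
      (∫⁻ x in A, searchTime μ S x ∂μ) / μ A := by
  set δ := sInf ((fun x => dist O x) '' A)
  have hδ0 : 0 ≤ δ := Real.sInf_nonneg (by rintro _ ⟨x, -, rfl⟩; exact dist_nonneg)
  rw [ENNReal.le_div_iff_mul_le (Or.inl hpos.ne') (Or.inl hfin.ne)]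
  calc (ENNReal.ofReal δ + μ A / 2) * μ A
      = ∫⁻ t in Ioi 0, (μ A - (ENNReal.ofReal t - ENNReal.ofReal δ)) :=
        (lintegral_Ioi_tsub_ofReal_tsub hfin.ne hδ0).symm
    _ ≤ ∫⁻ t in Ioi 0, μ.restrict A {x | ENNReal.ofReal t ≤ searchTime μ S x} :=
        lintegral_mono (hS.sub_le_restrict_setOf_le_searchTime hA hδ)
    _ ≤ ∫⁻ x in A, searchTime μ S x ∂μ := lintegral_meas_le_le_lintegral _ hmeas.aemeasurable
end

section
/- Let L and M be reals with 0 < L ≤ M, and set M' := min{M, √(L(L+2))}. Then for all x with 0 < x ≤ L and all y with 0 < y ≤ M, the quantity 2xy/(x(x+2) + y(y+2)) is at most 2LM'/(L(L+2) + M'(M'+2)), with equality when x = L and y = M'. -/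
/-- For `0 < L ≤ M` and `M' = min{M, √(L(L+2))}`, the quantity
`2xy/(x(x+2)+y(y+2))` over `0 < x ≤ L`, `0 < y ≤ M` is at most
`2LM'/(L(L+2)+M'(M'+2))`, with equality when `x = L` and `y = M'`. -/
theorem Y_network_hider_optimization (L M M' : ℝ) (hL : 0 < L) (hLM : L ≤ M)
    (hM' : M' = min M (Real.sqrt (L * (L + 2)))) :
    (∀ x y : ℝ, 0 < x → x ≤ L → 0 < y → y ≤ M →
      2 * x * y / (x * (x + 2) + y * (y + 2)) ≤
        2 * L * M' / (L * (L + 2) + M' * (M' + 2))) ∧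
    (∀ x y : ℝ, x = L → y = M' →
      2 * x * y / (x * (x + 2) + y * (y + 2)) =
        2 * L * M' / (L * (L + 2) + M' * (M' + 2))) := by
  have hv : (0:ℝ) < L * (L + 2) := by positivity
  have hsq : 0 < Real.sqrt (L * (L + 2)) := Real.sqrt_pos.2 hv
  have hb : 0 < M' := by rw [hM']; exact lt_min (hL.trans_le hLM) hsq
  constructor
  · intro x y hx hxL hy hyM
    have hDxy : 0 < x * (x + 2) + y * (y + 2) := by positivity
    have hDab : 0 < L * (L + 2) + M' * (M' + 2) := by positivity
    rw [div_le_div_iff₀ hDxy hDab]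
    rcases le_total M (Real.sqrt (L * (L + 2))) with hc | hc
    · -- M' = M
      have hbM : M' = M := by rw [hM', min_eq_left hc]
      rw [hbM] at *
      have hM2 : M * M ≤ L * (L + 2) := by
        have := Real.mul_self_sqrt hv.le
        nlinarith [Real.sqrt_nonneg (L * (L + 2)),
          mul_self_le_mul_self (hL.trans_le hLM).le hc]
      rcases le_total (L * y) (M * x) with h1 | h1
      · have h2 : M * y ≤ (L + 2) * x := by nlinarith
        nlinarith [mul_nonneg (mul_nonneg (hL.trans_le hLM).le (sub_nonneg.2 hxL))
            (by positivity : (0:ℝ) ≤ x + y),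
          mul_nonneg (sub_nonneg.2 h1) (sub_nonneg.2 h2)]
      · have h2 : L * x ≤ (M + 2) * y := by nlinarith
        nlinarith [mul_nonneg (mul_nonneg hL.le (sub_nonneg.2 hyM))
            (by positivity : (0:ℝ) ≤ x + y),
          mul_nonneg (sub_nonneg.2 h1) (sub_nonneg.2 h2)]
    · -- M' = sqrt
      have hbs : M' = Real.sqrt (L * (L + 2)) := by rw [hM', min_eq_right hc]
      have hb2 : M' * M' = L * (L + 2) := by rw [hbs]; exact Real.mul_self_sqrt hv.le
      rcases le_total (L * y) (M' * x) with h1 | h1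
      · have h2 : M' * y ≤ (L + 2) * x := by
          nlinarith [mul_nonneg hb.le (sub_nonneg.2 h1)]
        nlinarith [mul_nonneg (mul_nonneg hb.le (sub_nonneg.2 hxL))
            (by positivity : (0:ℝ) ≤ x + y),
          mul_nonneg (sub_nonneg.2 h1) (sub_nonneg.2 h2)]
      · have h2 : (L + 2) * x ≤ M' * y := by
          nlinarith [mul_nonneg hb.le (sub_nonneg.2 h1)]
        nlinarith [mul_nonneg (mul_nonneg hb.le (sub_nonneg.2 hxL))
            (by positivity : (0:ℝ) ≤ x + y),
          mul_nonneg (sub_nonneg.2 h1) (sub_nonneg.2 h2)]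
  · intro x y hxe hye
    rw [hxe, hye]
end

section
/- Let L and M be reals with 0 < L ≤ M, set M' := min{M, √(L(L+2))}, D := L(L+2) + M'(M'+2), V := 1 + 2LM'/D, and let p_A = 2M'/D, p_B = (L(L+2) − M'²)/D, p_C = 2L²/D, p_D = 2(M'² − L²)/D. Then for every real a with 0 ≤ a ≤ L: p_A(1+a) + p_B(1+M'+a) + p_C(1 + a(L+M')/L) + p_D(1 + M'/2 + a) = V(1+a). -/
/-- With `0 < L ≤ M`, `M' = min{M, √(L(L+2))}`, `D = L(L+2)+M'(M'+2)`,
`V = 1 + 2LM'/D` and probabilities `p_A = 2M'/D`, `p_B = (L(L+2)−M'²)/D`, `p_C = 2L²/D`,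
`p_D = 2(M'² − L²)/D`, for every `0 ≤ a ≤ L`:
`p_A(1+a) + p_B(1+M'+a) + p_C(1 + a(L+M')/L) + p_D(1 + M'/2 + a) = V(1+a)`. -/
theorem Y_network_left_arc_value (L M M' D V : ℝ) (hL : 0 < L) (hLM : L ≤ M)
    (hM' : M' = min M (Real.sqrt (L * (L + 2))))
    (hD : D = L * (L + 2) + M' * (M' + 2))
    (hV : V = 1 + 2 * L * M' / D) :
    ∀ a : ℝ, 0 ≤ a → a ≤ L →
      (2 * M' / D) * (1 + a) + ((L * (L + 2) - M' ^ 2) / D) * (1 + M' + a) +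
        (2 * L ^ 2 / D) * (1 + a * (L + M') / L) +
        (2 * (M' ^ 2 - L ^ 2) / D) * (1 + M' / 2 + a) = V * (1 + a) := by
  intro a ha haL
  have hM'pos : 0 < M' := by
    rw [hM']
    exact lt_min (hL.trans_le hLM)
      (Real.sqrt_pos.mpr (by positivity))
  have hDpos : 0 < D := by rw [hD]; positivity
  subst hV hD
  field_simp
  ring
end

section
/- Let L and M be reals with 0 < L ≤ M, set M' := min{M, √(L(L+2))}, D := L(L+2) + M'(M'+2), V := 1 + 2LM'/D, and let p_A = 2M'/D, p_B = (L(L+2) − M'²)/D, p_C = 2L²/D, p_D = 2(M'² − L²)/D. Then for every real b with 0 ≤ b ≤ M': p_A(1+L+b) + p_B(1+b) + (p_C + p_D)(1 + b(L+M')/M') = V(1+b). -/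
/-- With `0 < L ≤ M`, `M' = min{M, √(L(L+2))}`, `D = L(L+2)+M'(M'+2)`,
`V = 1 + 2LM'/D` and probabilities `p_A = 2M'/D`, `p_B = (L(L+2)−M'²)/D`, `p_C = 2L²/D`,
`p_D = 2(M'² − L²)/D`, for every `0 ≤ b ≤ M'`:
`p_A(1+L+b) + p_B(1+b) + (p_C + p_D)(1 + b(L+M')/M') = V(1+b)`. -/
theorem Y_network_right_arc_value (L M M' D V : ℝ) (hL : 0 < L) (hLM : L ≤ M)
    (hM' : M' = min M (Real.sqrt (L * (L + 2))))
    (hD : D = L * (L + 2) + M' * (M' + 2))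
    (hV : V = 1 + 2 * L * M' / D) :
    ∀ b : ℝ, 0 ≤ b → b ≤ M' →
      (2 * M' / D) * (1 + L + b) + ((L * (L + 2) - M' ^ 2) / D) * (1 + b) +
        (2 * L ^ 2 / D + 2 * (M' ^ 2 - L ^ 2) / D) * (1 + b * (L + M') / M') = V * (1 + b) := by
  have hM0 : 0 < M := lt_of_lt_of_le hL hLM
  have hs : 0 < Real.sqrt (L * (L + 2)) := Real.sqrt_pos.mpr (by nlinarith)
  have hM'0 : 0 < M' := by rw [hM']; exact lt_min hM0 hs
  have hD0 : 0 < D := by rw [hD]; nlinarith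
  intro b _ _
  subst hD
  rw [hV]
  field_simp
  ring
end

section
/- Let L and M be reals with 0 < L ≤ M and suppose M > √(L(L+2)), so that M' := √(L(L+2)) < M. With D := L(L+2) + M'(M'+2) and V := 1 + 2LM'/D, for every real b with M' < b ≤ M one has 1 + L + b < V(1+b). -/
/-- With `0 < L ≤ M` and `√(L(L+2)) < M`, so `M' = √(L(L+2)) < M`, and with
`D = L(L+2)+M'(M'+2)` and `V = 1 + 2LM'/D`, every `b` with `M' < b ≤ M` satisfies
`1 + L + b < V(1+b)`. -/
theorem Y_network_far_right_points (L M M' D V : ℝ) (hL : 0 < L) (hLM : L ≤ M)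
    (hMbig : Real.sqrt (L * (L + 2)) < M)
    (hM' : M' = Real.sqrt (L * (L + 2)))
    (hD : D = L * (L + 2) + M' * (M' + 2))
    (hV : V = 1 + 2 * L * M' / D) :
    ∀ b : ℝ, M' < b → b ≤ M → 1 + L + b < V * (1 + b) := by
  intro b hb1 hb2
  have hM'pos : 0 < M' := by
    rw [hM']
    exact Real.sqrt_pos.mpr (by positivity)
  have hsq : M' * M' = L * (L + 2) := by
    rw [hM']
    exact Real.mul_self_sqrt (by positivity)
  have hDeq : D = 2 * M' * (M' + 1) := by rw [hD, ← hsq]; ring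
  have hDpos : 0 < D := by rw [hDeq]; nlinarith
  have h2 : L * D < 2 * L * M' * (1 + b) := by nlinarith [mul_lt_mul_of_pos_left hb1 (mul_pos hL hM'pos)]
  have h3 : L < 2 * L * M' * (1 + b) / D := (lt_div_iff₀ hDpos).mpr h2
  have h1 : V * (1 + b) = (1 + b) + 2 * L * M' * (1 + b) / D := by
    rw [hV]; field_simp
  rw [h1]; linarith
end

section
/- Let k be an integer, let d be a real with 2^{k-1} ≤ d ≤ 2^k, let ρ ≥ 0, and for each j ∈ {k−1, k, k+1} let c_j be a real with 0 ≤ c_j ≤ 2^{j-1} ρ. Then (3/(2d) − 1/2^{k-1})·c_{k-1} + (3/(2d) − 1/2^k)·c_k + (1/2^{k-1} − 1/d)·c_{k+1} ≤ (5/4)·ρ. -/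
/-- For an integer `k`, a real `d ∈ [2^{k-1}, 2^k]`, `ρ ≥ 0`, and reals
`c_{k-1}, c_k, c_{k+1}` with `0 ≤ c_j ≤ 2^{j-1} ρ`,
`(3/(2d) − 1/2^{k-1}) c_{k-1} + (3/(2d) − 1/2^k) c_k + (1/2^{k-1} − 1/d) c_{k+1} ≤ (5/4) ρ`. -/
theorem doubling_strategy_final_inequality (k : ℤ) (d ρ c₁ c₂ c₃ : ℝ)
    (hd₁ : (2 : ℝ) ^ (k - 1) ≤ d) (hd₂ : d ≤ (2 : ℝ) ^ k) (hρ : 0 ≤ ρ)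
    (hc₁ : 0 ≤ c₁) (hc₁' : c₁ ≤ (2 : ℝ) ^ (k - 2) * ρ)
    (hc₂ : 0 ≤ c₂) (hc₂' : c₂ ≤ (2 : ℝ) ^ (k - 1) * ρ)
    (hc₃ : 0 ≤ c₃) (hc₃' : c₃ ≤ (2 : ℝ) ^ k * ρ) :
    (3 / (2 * d) - 1 / (2 : ℝ) ^ (k - 1)) * c₁ + (3 / (2 * d) - 1 / (2 : ℝ) ^ k) * c₂ +
      (1 / (2 : ℝ) ^ (k - 1) - 1 / d) * c₃ ≤ (5 / 4) * ρ := by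
  set P : ℝ := (2 : ℝ) ^ (k - 1) with hPdef
  have hP : 0 < P := zpow_pos two_pos _
  have h2k : (2 : ℝ) ^ k = 2 * P := by
    rw [hPdef, mul_comm, ← zpow_add_one₀ (by norm_num : (2:ℝ) ≠ 0)]
    norm_num
  have h2k2 : (2 : ℝ) ^ (k - 2) = P / 2 := by
    rw [hPdef, eq_div_iff (by norm_num : (2:ℝ) ≠ 0),
      ← zpow_add_one₀ (by norm_num : (2:ℝ) ≠ 0)]
    congr 1
    ring
  rw [h2k] at hd₂ hc₃' ⊢
  rw [h2k2] at hc₁'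
  have hd0 : 0 < d := lt_of_lt_of_le hP hd₁
  have hC : 0 ≤ 1 / P - 1 / d := by
    rw [sub_nonneg, div_le_div_iff₀ hd0 hP]; linarith
  have hB : 0 ≤ 3 / (2 * d) - 1 / (2 * P) := by
    rw [sub_nonneg, div_le_div_iff₀ (by positivity) (by positivity)]; linarith
  rcases le_or_gt d (3 * P / 2) with h | h
  · have hA : 0 ≤ 3 / (2 * d) - 1 / P := by
      rw [sub_nonneg, div_le_div_iff₀ hP (by positivity)]; linarith
    have t1 : (3 / (2 * d) - 1 / P) * c₁ ≤ (3 / (2 * d) - 1 / P) * (P / 2 * ρ) :=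
      mul_le_mul_of_nonneg_left hc₁' hA
    have t2 : (3 / (2 * d) - 1 / (2 * P)) * c₂ ≤ (3 / (2 * d) - 1 / (2 * P)) * (P * ρ) :=
      mul_le_mul_of_nonneg_left hc₂' hB
    have t3 : (1 / P - 1 / d) * c₃ ≤ (1 / P - 1 / d) * (2 * P * ρ) :=
      mul_le_mul_of_nonneg_left hc₃' hC
    have key : (3 / (2 * d) - 1 / P) * (P / 2 * ρ) + (3 / (2 * d) - 1 / (2 * P)) * (P * ρ)
        + (1 / P - 1 / d) * (2 * P * ρ) ≤ 5 / 4 * ρ := by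
      have hsum : (3 / (2 * d) - 1 / P) * (P / 2) + (3 / (2 * d) - 1 / (2 * P)) * P
          + (1 / P - 1 / d) * (2 * P) ≤ 5 / 4 := by
        have hPd : P / d ≤ 1 := (div_le_one hd0).mpr hd₁
        have heq : (3 / (2 * d) - 1 / P) * (P / 2) + (3 / (2 * d) - 1 / (2 * P)) * P
            + (1 / P - 1 / d) * (2 * P) = 1 + (P / d) / 4 := by
          field_simp
          ring
        rw [heq]; linarith
      nlinarith [hsum, hρ]
    linarith
  · have hA : (3 / (2 * d) - 1 / P) ≤ 0 := by
      rw [sub_nonpos, div_le_div_iff₀ (by positivity) hP]; linarith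
    have t1 : (3 / (2 * d) - 1 / P) * c₁ ≤ 0 := mul_nonpos_of_nonpos_of_nonneg hA hc₁
    have t2 : (3 / (2 * d) - 1 / (2 * P)) * c₂ ≤ (3 / (2 * d) - 1 / (2 * P)) * (P * ρ) :=
      mul_le_mul_of_nonneg_left hc₂' hB
    have t3 : (1 / P - 1 / d) * c₃ ≤ (1 / P - 1 / d) * (2 * P * ρ) :=
      mul_le_mul_of_nonneg_left hc₃' hC
    have key : (3 / (2 * d) - 1 / (2 * P)) * (P * ρ) + (1 / P - 1 / d) * (2 * P * ρ)
        ≤ 5 / 4 * ρ := by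
      have hsum : (3 / (2 * d) - 1 / (2 * P)) * P + (1 / P - 1 / d) * (2 * P) ≤ 5 / 4 := by
        have hPd : 1 / 2 ≤ P / d := by
          rw [le_div_iff₀ hd0]; linarith
        have heq : (3 / (2 * d) - 1 / (2 * P)) * P + (1 / P - 1 / d) * (2 * P)
            = 3 / 2 - (P / d) / 2 := by
          field_simp
          ring
        rw [heq]; linarith
      nlinarith [hsum, hρ]
    linarith
end
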